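/- Let μ ∈ (0,1) and let α_F, α_U, α_C ∈ [0,1] with α_F + α_U + α_C = 1, α_F < μ, α_U < 1−μ, and α_C > 0. Let P_{lH}, P_{hH}, P_{lL}, P_{hL} ∈ [0,1] satisfy P_{lH} + P_{hH} = 1, P_{lL} + P_{hL} = 1, and P_{hH} > P_{hL}. Then there exist β_l, β_h ∈ [0,1] such that α_F + α_C·(P_{lH}·β_l + P_{hH}·β_h) > μ and α_U + α_C·(P_{lL}·(1−β_l) + P_{hL}·(1−β_h)) > 1−μ. -/

import Mathlib

/-- key construction step in the proof of Theorem 3. Given the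
majority threshold `μ ∈ (0,1)`, type fractions `α_F, α_U, α_C ∈ [0,1]` summing to `1`
with `α_F < μ`, `α_U < 1 - μ` and `α_C > 0`, and signal distributions with
`P_{hH} > P_{hL}`, there is a strategy `(β_l, β_h) ∈ [0,1]²` for the contingent agents
such that the expected vote share of `A` strictly exceeds `μ` in state `H` and the
expected vote share of `R` strictly exceeds `1 - μ` in state `L`. -/
theorem exists_strategy_positive_excess_share
    (μ αF αU αC PlH PhH PlL PhL : ℝ)
    (hμ0 : 0 < μ) (hμ1 : μ < 1)
    (hαF0 : 0 ≤ αF) (hαF1 : αF ≤ 1)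
    (hαU0 : 0 ≤ αU) (hαU1 : αU ≤ 1)
    (hαC0 : 0 ≤ αC) (hαC1 : αC ≤ 1)
    (hαsum : αF + αU + αC = 1)
    (hαFμ : αF < μ) (hαUμ : αU < 1 - μ) (hαC : 0 < αC)
    (hPlH0 : 0 ≤ PlH) (hPlH1 : PlH ≤ 1)
    (hPhH0 : 0 ≤ PhH) (hPhH1 : PhH ≤ 1)
    (hPlL0 : 0 ≤ PlL) (hPlL1 : PlL ≤ 1)
    (hPhL0 : 0 ≤ PhL) (hPhL1 : PhL ≤ 1)
    (hsumH : PlH + PhH = 1) (hsumL : PlL + PhL = 1)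
    (hcorr : PhL < PhH) :
    ∃ βl βh : ℝ, 0 ≤ βl ∧ βl ≤ 1 ∧ 0 ≤ βh ∧ βh ≤ 1 ∧
      μ < αF + αC * (PlH * βl + PhH * βh) ∧
      1 - μ < αU + αC * (PlL * (1 - βl) + PhL * (1 - βh)) := by
  set p : ℝ := (μ - αF) / αC with hp
  have hαCp : αC * p = μ - αF := by rw [hp]; field_simp [hαC.ne']
  have hp0 : 0 < p := div_pos (by linarith) hαC
  have hp1 : p < 1 := by
    rw [div_lt_one hαC]; linarith
  set d : ℝ := min p (1 - p) with hd
  have hd0 : 0 < d := lt_min hp0 (by linarith)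
  have hdp : d ≤ p := min_le_left _ _
  have hd1p : d ≤ 1 - p := min_le_right _ _
  set m : ℝ := (PhH + PhL) / 2 with hm
  have hm0 : 0 ≤ m := by positivity
  have hm1 : m ≤ 1 := by rw [hm]; linarith
  have hmd0 : 0 ≤ m * d := mul_nonneg hm0 hd0.le
  have hmdd : m * d ≤ d := mul_le_of_le_one_left hd0.le hm1
  refine ⟨p - m * d, p - m * d + d, ?_, ?_, ?_, ?_, ?_, ?_⟩
  · linarith
  · linarith
  · linarith
  · linarith
  · have hPlH : PlH = 1 - PhH := by linarith
    have key : PlH * (p - m * d) + PhH * (p - m * d + d) = p + d * (PhH - PhL) / 2 := by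
      rw [hPlH, hm]; ring
    rw [key]
    nlinarith [mul_pos hαC (mul_pos hd0 (by linarith : (0:ℝ) < PhH - PhL))]
  · have hPlL : PlL = 1 - PhL := by linarith
    have key : PlL * (1 - (p - m * d)) + PhL * (1 - (p - m * d + d))
        = 1 - p + d * (PhH - PhL) / 2 := by
      rw [hPlL, hm]; ring
    rw [key]
    nlinarith [mul_pos hαC (mul_pos hd0 (by linarith : (0:ℝ) < PhH - PhL))]
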